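/- The quaternion group Q₈ is 2-flexible but not 1-flexible. -/

import Mathlib

noncomputable def dG (G : Type*) [Group G] : ℕ :=
  sInf {n | ∃ s : Finset G, s.card = n ∧ Subgroup.closure (s : Set G) = ⊤}

def Flexible (G : Type*) [Group G] (k : ℕ) : Prop :=
  ∀ x : Fin k → G, dG ↥(Subgroup.closure (Set.range x)) = k →
    ∃ y : Fin (dG G - k) → G, Subgroup.closure (Set.range x ∪ Set.range y) = ⊤

/-!
Every proper subgroup of Q₈ is cyclic: an element of order 4 generates a subgroup of index 2,
and the elements of order at most 2 are just `±1`. Hence two elements generating a noncyclic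
subgroup generate Q₈. On the other hand `-1 = a 2` is the square of every element of order 4, so
together with any single element it generates a cyclic, hence proper, subgroup; since Q₈ is
2-generated, `-1` does not extend to a generating set of size `d(Q₈)`.
-/

open Subgroup

section GeneratorRank

variable {G : Type*} [Group G]

theorem dG_le_card (s : Finset G) (hs : closure (s : Set G) = ⊤) : dG G ≤ s.card :=
  Nat.sInf_le ⟨s, rfl, hs⟩

theorem dG_le_one_of_isCyclic [IsCyclic G] : dG G ≤ 1 := by
  obtain ⟨g, hg⟩ := (isCyclic_iff_exists_zpowers_eq_top (α := G)).mp inferInstance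
  simpa using dG_le_card {g} (by simpa [← zpowers_eq_closure] using hg)

theorem dG_eq_one_of_isCyclic [IsCyclic G] [Nontrivial G] : dG G = 1 := by
  refine le_antisymm dG_le_one_of_isCyclic (Nat.one_le_iff_ne_zero.mpr fun h0 => ?_)
  obtain ⟨g, hg⟩ := (isCyclic_iff_exists_zpowers_eq_top (α := G)).mp inferInstance
  obtain ⟨s, hcard, hs⟩ : dG G ∈ {n | ∃ s : Finset G, s.card = n ∧ closure (s : Set G) = ⊤} :=
    Nat.sInf_mem ⟨1, {g}, rfl, by simpa [← zpowers_eq_closure] using hg⟩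
  rw [h0, Finset.card_eq_zero] at hcard
  subst hcard
  simp only [Finset.coe_empty, Subgroup.closure_empty] at hs
  exact bot_ne_top hs

theorem flexible_two_of_forall_ne_top_isCyclic
    (h : ∀ H : Subgroup G, H ≠ ⊤ → IsCyclic H) : Flexible G 2 := by
  intro x hx
  have htop : closure (Set.range x) = ⊤ := by
    by_contra hne
    have := h _ hne
    have := dG_le_one_of_isCyclic (G := closure (Set.range x))
    omega
  exact ⟨fun _ => 1, top_le_iff.mp (htop ▸ closure_mono Set.subset_union_left)⟩

theorem exists_range_subset_singleton {m : ℕ} (hm : m ≤ 1) (y : Fin m → G) :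
    ∃ h : G, Set.range y ⊆ {h} := by
  have : Subsingleton (Fin m) := Fin.subsingleton_iff_le_one.mpr hm
  rcases (Set.subsingleton_range y).eq_empty_or_singleton with hy | ⟨h, hy⟩
  · exact ⟨1, hy ▸ Set.empty_subset _⟩
  · exact ⟨h, hy.le⟩

theorem not_flexible_one_of_forall_closure_pair_ne_top (hd : dG G ≤ 2) {g : G} (hg : g ≠ 1)
    (hpair : ∀ h : G, closure {g, h} ≠ ⊤) : ¬ Flexible G 1 := by
  intro hflex
  have : Nontrivial (zpowers g) := (nontrivial_iff_ne_bot _).mpr (by simpa using hg)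
  obtain ⟨y, hy⟩ := hflex (fun _ => g) (by
    rw [Set.range_const, ← zpowers_eq_closure]
    exact dG_eq_one_of_isCyclic)
  obtain ⟨h, hyh⟩ := exists_range_subset_singleton (by omega) y
  refine hpair h (top_le_iff.mp (hy ▸ closure_mono ?_))
  rw [Set.range_const]
  exact Set.union_subset_union (le_refl _) hyh

end GeneratorRank

theorem commute_of_mem_zpowers {G : Type*} [Group G] {w x y : G} (hx : x ∈ zpowers w)
    (hy : y ∈ zpowers w) : Commute x y := by
  obtain ⟨m, rfl⟩ := mem_zpowers_iff.mp hx
  obtain ⟨n, rfl⟩ := mem_zpowers_iff.mp hy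
  exact Commute.zpow_zpow_self w m n

namespace QuaternionGroup

local notation "Q₈" => QuaternionGroup 2

theorem not_commute_a_one_xa_zero : ¬ Commute (a 1 : Q₈) (xa 0) := fun h =>
  absurd h.eq (by decide)

theorem zpowers_ne_top (w : Q₈) : zpowers w ≠ ⊤ := fun h =>
  not_commute_a_one_xa_zero (commute_of_mem_zpowers (h ▸ mem_top _) (h ▸ mem_top _))

theorem sq_eq_one_or_sq_eq_a_two : ∀ g : Q₈, g ^ 2 = 1 ∨ g ^ 2 = a 2 := by
  decide

theorem pow_four_eq_one : ∀ g : Q₈, g ^ 4 = 1 := by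
  decide

theorem eq_one_or_eq_a_two_of_sq_eq_one : ∀ g : Q₈, g ^ 2 = 1 → g = 1 ∨ g = a 2 := by
  decide

theorem mem_zpowers_a_two_of_sq_eq_one {g : Q₈} (hg : g ^ 2 = 1) : g ∈ zpowers (a 2) := by
  rcases eq_one_or_eq_a_two_of_sq_eq_one g hg with rfl | rfl
  · exact one_mem _
  · exact mem_zpowers _

theorem orderOf_eq_four_of_sq_ne_one {g : Q₈} (hg : g ^ 2 ≠ 1) : orderOf g = 4 :=
  orderOf_eq_prime_pow (p := 2) (n := 1) (by simpa using hg) (pow_four_eq_one g)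

theorem isCyclic_of_ne_top {H : Subgroup Q₈} (hH : H ≠ ⊤) : IsCyclic H := by
  by_cases hsq : ∃ g ∈ H, g ^ 2 ≠ 1
  · obtain ⟨g, hgH, hg⟩ := hsq
    have hcard : Nat.card H ≤ 4 := by
      have hmul := H.card_mul_index
      have hidx := H.one_lt_index_of_ne_top hH
      rw [Nat.card_eq_fintype_card (α := Q₈), card] at hmul
      nlinarith
    obtain rfl : zpowers g = H := eq_of_le_of_card_ge (zpowers_le.mpr hgH)
      (by rwa [Nat.card_zpowers, orderOf_eq_four_of_sq_ne_one hg])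
    infer_instance
  · push Not at hsq
    exact isCyclic_of_le (H' := zpowers (a 2)) fun g hg =>
      mem_zpowers_a_two_of_sq_eq_one (hsq g hg)

theorem closure_a_one_xa_zero : closure {(a 1 : Q₈), xa 0} = ⊤ := by
  by_contra hne
  obtain ⟨w, hw⟩ :=
    (Subgroup.closure _).isCyclic_iff_exists_zpowers_eq_top.mp (isCyclic_of_ne_top hne)
  refine not_commute_a_one_xa_zero (commute_of_mem_zpowers (w := w) ?_ ?_) <;>
    rw [hw] <;> exact Subgroup.subset_closure (by simp)

theorem dG_le_two : dG Q₈ ≤ 2 := by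
  simpa using dG_le_card {a 1, xa 0} (by simpa using closure_a_one_xa_zero)

theorem closure_a_two_pair_ne_top (h : Q₈) : closure {a 2, h} ≠ ⊤ := by
  obtain ⟨w, ha, hh⟩ : ∃ w : Q₈, a 2 ∈ zpowers w ∧ h ∈ zpowers w := by
    rcases sq_eq_one_or_sq_eq_a_two h with hsq | hsq
    · exact ⟨a 2, mem_zpowers _, mem_zpowers_a_two_of_sq_eq_one hsq⟩
    · exact ⟨h, hsq ▸ pow_mem (mem_zpowers h) 2, mem_zpowers h⟩
  intro htop
  apply zpowers_ne_top w
  rw [eq_top_iff, ← htop, closure_le]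
  exact Set.insert_subset ha (Set.singleton_subset_iff.mpr hh)

end QuaternionGroup

open QuaternionGroup in
theorem quaternion_two_flexible_not_one_flexible :
    Flexible (QuaternionGroup 2) 2 ∧ ¬ Flexible (QuaternionGroup 2) 1 :=
  ⟨flexible_two_of_forall_ne_top_isCyclic fun _ => isCyclic_of_ne_top,
    not_flexible_one_of_forall_closure_pair_ne_top dG_le_two (by decide) closure_a_two_pair_ne_top⟩
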